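/- For every q ∈ Q_Q(ℝⁿ) with card(spt(q)) ≥ 2, there exist an integer L with 1 ≤ L ≤ Q−1, members q^{(0)} = q, q^{(1)},...,q^{(L)} ∈ Q_Q(ℝⁿ), and numbers 0 = ρ₀ < σ₀ < ρ₁ < σ₁ < ⋯ < ρ_L such that: (b) spt(q^{(k−1)}) ⊋ spt(q^{(k)}) for each k and spt(q^{(L)}) is a single point; (c) 10Q·ρ_k ≤ σ_k for k < L, where σ_k = (sin θ₀/4)·min over distinct support points of q^{(k)} of their mutual distance; (d) σ_{k−1} < ρ_k ≤ C₀(n,Q)·σ_{k−1} for some constant C₀(n,Q) = [1+2K(Q−1)²]^{Q−1} with K = 20Q/sin θ₀; (e) B^Q_{σ_{k−1}}(q^{(k−1)}) ⊆ B^Q_{ρ_k}(q^{(k)}); and (f) G(q^{(0)}, q^{(k)}) < (Q−1)·ρ_k. -/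

import Mathlib

/-!
Cluster the points of `q` at scale `t` (`i ∼ j` when a chain of points with gaps `≤ t` joins
them) and collapse every cluster onto one of its points. Each point lies within `(Q - 1) t` of its
cluster's representative, which does not move, so the collapse moves `q` by at most `(Q - 1)² t`
in `G`. Take the scales `t_k = 10 Q d A^k`, where `d` is the minimal separation of `q` and
`A = 1 + 2 K (Q - 1)²`. At `t_0 ≥ d` the two closest points are merged, so there are at most
`Q - 1` clusters, and one of the `Q - 1` transitions `t_k → t_{k+1}`, `k ≤ Q - 2`, merges none:
the clusters at `t_k` and `t_{k+1}` agree. Collapsing at `t_k` then gives a tuple whose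
separation exceeds `t_{k+1} = A t_k`, and `ρ = σ + (Q - 1)² t_k` satisfies all the
constraints, with `ρ ≤ A^{k+1} σ`. The support shrinks at every step, so iterating stops after
at most `Q - 1` steps. Only `sin θ₀ > 0` matters, so `θ₀ = π/4` will do.
-/

open Finset
open scoped Classical

/-- The Almgren metric on unordered `Q`-tuples in `ℝⁿ`. -/
noncomputable def Gdist {n Q : ℕ} (p q : Fin Q → EuclideanSpace ℝ (Fin n)) : ℝ :=
  Finset.univ.inf' Finset.univ_nonempty
    (fun σ : Equiv.Perm (Fin Q) => Real.sqrt (∑ i, ‖p i - q (σ i)‖ ^ 2))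

lemma Nat.exists_lt_apply_succ_eq_of_antitone {f : ℕ → ℕ} (hf : Antitone f) (hpos : ∀ k, 0 < f k) :
    ∃ j < f 0, f (j + 1) = f j := by
  by_contra! h
  have hdrop : ∀ j ≤ f 0, f j + j ≤ f 0 := by
    intro j hj
    induction j with
    | zero => simp
    | succ j ih =>
      have hlt : f (j + 1) < f j := lt_of_le_of_ne (hf j.le_succ) (h j hj)
      have := ih (by omega)
      omega
  have := hdrop (f 0) le_rfl
  have := hpos (f 0)
  omega

lemma Function.exists_iterate_lt_two {α : Type*} (F : α → α) (m : α → ℕ)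
    (hF : ∀ x, 2 ≤ m x → m (F x) < m x) (x : α) :
    ∃ L, L + m (F^[L] x) ≤ m x ∧ m (F^[L] x) < 2 ∧ ∀ k < L, 2 ≤ m (F^[k] x) := by
  induction hx : m x using Nat.strong_induction_on generalizing x with
  | _ N ih =>
    by_cases h : m x < 2
    · exact ⟨0, by simp [hx], h, by simp⟩
    have hdec := hF x (by omega)
    obtain ⟨L, hlen, hlt, hge⟩ := ih _ (hx ▸ hdec) (F x) rfl
    refine ⟨L + 1, ?_, by rwa [Function.iterate_succ_apply], ?_⟩
    · rw [Function.iterate_succ_apply]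
      omega
    · rintro (_ | k) hk
      · simpa using not_lt.1 h
      · rw [Function.iterate_succ_apply]
        exact hge k (by omega)

lemma Nat.forall_one_le_of_forall_succ {L : ℕ} {P : ℕ → Prop} (h : ∀ j < L, P (j + 1)) :
    ∀ k, 1 ≤ k → k ≤ L → P k := by
  rintro (_ | j) hk hkL
  · omega
  · exact h j hkL

lemma card_image_lt_of_range_ssubset {ι α : Type*} [Fintype ι] [DecidableEq α] {q q' : ι → α}
    (h : Set.range q' ⊂ Set.range q) : (univ.image q').card < (univ.image q).card :=
  card_lt_card (coe_ssubset.1 (by simpa only [coe_image, coe_univ, Set.image_univ] using h))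

lemma card_image_fin_le {α : Type*} [DecidableEq α] {Q : ℕ} (q : Fin Q → α) :
    (univ.image q).card ≤ Q :=
  card_image_le.trans_eq (card_fin Q)

namespace SimpleGraph

variable {V : Type*} [Finite V] {G G' : SimpleGraph V}

lemma Reachable.of_le_of_card_connectedComponent_le (hle : G ≤ G')
    (hc : Nat.card G.ConnectedComponent ≤ Nat.card G'.ConnectedComponent) {u v : V}
    (h : G'.Reachable u v) : G.Reachable u v := by
  have hinj := ((ConnectedComponent.surjective_map_ofLE hle).bijective_of_nat_card_le hc).1
  exact ConnectedComponent.exact (hinj (ConnectedComponent.sound h))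

lemma card_connectedComponent_lt_of_adj {u v : V} (h : G.Adj u v) :
    Nat.card G.ConnectedComponent < Nat.card V := by
  by_contra! hc
  have hinj := (Quot.mk_surjective.bijective_of_nat_card_le hc).1
  exact h.ne (hinj (ConnectedComponent.sound h.reachable))

end SimpleGraph

section ScaleGraph

open SimpleGraph

variable {ι E : Type*} [PseudoMetricSpace E]

def scaleGraph (q : ι → E) (t : ℝ) : SimpleGraph ι where
  Adj i j := i ≠ j ∧ dist (q i) (q j) ≤ t
  symm := ⟨fun i j h => ⟨h.1.symm, dist_comm (q j) (q i) ▸ h.2⟩⟩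
  loopless := ⟨fun _ h => h.1 rfl⟩

variable {q : ι → E} {t t' : ℝ} {i j : ι}

lemma scaleGraph_mono (h : t ≤ t') : scaleGraph q t ≤ scaleGraph q t' :=
  fun _ _ hij => ⟨hij.1, hij.2.trans h⟩

lemma scaleGraph_reachable_of_eq (ht : 0 ≤ t) (h : q i = q j) :
    (scaleGraph q t).Reachable i j := by
  by_cases hij : i = j
  · exact hij ▸ .refl i
  · exact Adj.reachable ⟨hij, by simpa [h] using ht⟩

lemma dist_le_length_mul (w : (scaleGraph q t).Walk i j) :
    dist (q i) (q j) ≤ w.length * t := by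
  induction w with
  | nil => simp
  | cons h _ ih =>
    rw [Walk.length_cons, Nat.cast_succ, add_mul, one_mul, add_comm]
    exact (dist_triangle _ _ _).trans (add_le_add h.2 ih)

lemma dist_le_of_reachable [Fintype ι] (ht : 0 ≤ t) (h : (scaleGraph q t).Reachable i j) :
    dist (q i) (q j) ≤ (Fintype.card ι - 1 : ℝ) * t := by
  obtain ⟨w⟩ := h
  have hlen : (w.toPath.1.length : ℝ) ≤ Fintype.card ι - 1 := by
    have := w.toPath.2.length_lt
    rw [le_sub_iff_add_le]
    exact_mod_cast this
  exact (dist_le_length_mul _).trans (mul_le_mul_of_nonneg_right hlen ht)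

noncomputable def clusterRep (q : ι → E) (t : ℝ) (i : ι) : ι :=
  ((scaleGraph q t).connectedComponentMk i).out

lemma reachable_clusterRep : (scaleGraph q t).Reachable i (clusterRep q t i) :=
  (ConnectedComponent.exact (Quot.out_eq _)).symm

lemma clusterRep_eq_iff : clusterRep q t i = clusterRep q t j ↔ (scaleGraph q t).Reachable i j :=
  ⟨fun h => reachable_clusterRep.trans (h ▸ reachable_clusterRep.symm),
    fun h => congrArg Quot.out (ConnectedComponent.sound h)⟩

lemma clusterRep_clusterRep : clusterRep q t (clusterRep q t i) = clusterRep q t i :=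
  clusterRep_eq_iff.2 reachable_clusterRep.symm

noncomputable def collapse (q : ι → E) (t : ℝ) (i : ι) : E := q (clusterRep q t i)

lemma collapse_clusterRep : collapse q t (clusterRep q t i) = q (clusterRep q t i) := by
  rw [collapse, clusterRep_clusterRep]

lemma dist_collapse_le [Fintype ι] (ht : 0 ≤ t) (i : ι) :
    dist (q i) (collapse q t i) ≤ (Fintype.card ι - 1 : ℝ) * t :=
  dist_le_of_reachable ht reachable_clusterRep

lemma collapse_eq_of_mem_range (ht : 0 ≤ t) (h : q i ∈ Set.range (collapse q t)) :
    collapse q t i = q i := by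
  obtain ⟨a, ha⟩ := h
  have : clusterRep q t a = clusterRep q t i := by
    rw [← clusterRep_clusterRep (i := a)]
    exact clusterRep_eq_iff.2 (scaleGraph_reachable_of_eq ht ha)
  rw [collapse, ← this, ← ha, collapse]

lemma range_collapse_ssubset (ht : 0 ≤ t) (hij : q i ≠ q j) (hd : dist (q i) (q j) ≤ t) :
    Set.range (collapse q t) ⊂ Set.range q := by
  refine (Set.ssubset_iff_of_subset (Set.range_comp_subset_range _ q)).2 ?_
  by_contra! h
  have hrep : clusterRep q t i = clusterRep q t j :=
    clusterRep_eq_iff.2 (Adj.reachable ⟨fun e => hij (congrArg q e), hd⟩)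
  apply hij
  rw [← collapse_eq_of_mem_range ht (h _ ⟨i, rfl⟩), ← collapse_eq_of_mem_range ht (h _ ⟨j, rfl⟩),
    collapse, collapse, hrep]

lemma lt_dist_collapse
    (hstable : ∀ a b, (scaleGraph q t').Reachable a b → (scaleGraph q t).Reachable a b)
    (hij : collapse q t i ≠ collapse q t j) : t' < dist (collapse q t i) (collapse q t j) := by
  by_contra! h
  have hadj : (scaleGraph q t').Adj (clusterRep q t i) (clusterRep q t j) :=
    ⟨fun e => hij (congrArg q e), h⟩
  have := clusterRep_eq_iff.2 (hstable _ _ hadj.reachable)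
  rw [clusterRep_clusterRep, clusterRep_clusterRep] at this
  exact hij (congrArg q this)

lemma exists_stable_scale [Fintype ι] {w : ℕ → ℝ} (hw : Monotone w) {i j : ι} (hij : i ≠ j)
    (hd : dist (q i) (q j) ≤ w 0) :
    ∃ k, k + 2 ≤ Fintype.card ι ∧
      ∀ a b, (scaleGraph q (w (k + 1))).Reachable a b → (scaleGraph q (w k)).Reachable a b := by
  set f : ℕ → ℕ := fun k => Nat.card (scaleGraph q (w k)).ConnectedComponent
  have hf : Antitone f := fun _ _ h =>
    ConnectedComponent.card_le_card_of_le (scaleGraph_mono (hw h))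
  have hpos : ∀ k, 0 < f k := fun k =>
    have : Nonempty (scaleGraph q (w k)).ConnectedComponent := ⟨.mk _ i⟩
    Nat.card_pos
  have hf0 : f 0 < Fintype.card ι := Nat.card_eq_fintype_card (α := ι) ▸
    card_connectedComponent_lt_of_adj (G := scaleGraph q (w 0)) ⟨hij, hd⟩
  obtain ⟨k, hk, hfk⟩ := Nat.exists_lt_apply_succ_eq_of_antitone hf hpos
  exact ⟨k, by omega, fun a b =>
    Reachable.of_le_of_card_connectedComponent_le (scaleGraph_mono (hw k.le_succ)) hfk.ge⟩

end ScaleGraph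

lemma sqrt_sum_norm_add_sq_le {ι E : Type*} [Fintype ι] [SeminormedAddCommGroup E] (f g : ι → E) :
    √(∑ i, ‖f i + g i‖ ^ 2) ≤ √(∑ i, ‖f i‖ ^ 2) + √(∑ i, ‖g i‖ ^ 2) := by
  simpa only [PiLp.norm_eq_of_L2, WithLp.ofLp_add, Pi.add_apply] using
    norm_add_le (WithLp.toLp 2 f : PiLp 2 fun _ : ι => E) (WithLp.toLp 2 g)

section Gdist

variable {n Q : ℕ}

lemma gdist_le_sqrt_sum (p q : Fin Q → EuclideanSpace ℝ (Fin n)) (σ : Equiv.Perm (Fin Q)) :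
    Gdist p q ≤ √(∑ i, ‖p i - q (σ i)‖ ^ 2) :=
  inf'_le _ (mem_univ σ)

lemma gdist_triangle (p q r : Fin Q → EuclideanSpace ℝ (Fin n)) :
    Gdist p r ≤ Gdist p q + Gdist q r := by
  obtain ⟨σ, -, hσ⟩ := exists_mem_eq_inf' univ_nonempty
    fun σ : Equiv.Perm (Fin Q) => √(∑ i, ‖p i - q (σ i)‖ ^ 2)
  obtain ⟨τ, -, hτ⟩ := exists_mem_eq_inf' univ_nonempty
    fun τ : Equiv.Perm (Fin Q) => √(∑ i, ‖q i - r (τ i)‖ ^ 2)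
  have hreindex : ∑ i, ‖q (σ i) - r (τ (σ i))‖ ^ 2 = ∑ i, ‖q i - r (τ i)‖ ^ 2 :=
    Equiv.sum_comp σ fun i => ‖q i - r (τ i)‖ ^ 2
  calc Gdist p r ≤ √(∑ i, ‖p i - r ((σ.trans τ) i)‖ ^ 2) := gdist_le_sqrt_sum p r _
    _ ≤ √(∑ i, ‖p i - q (σ i)‖ ^ 2) + √(∑ i, ‖q (σ i) - r (τ (σ i))‖ ^ 2) := by
      simpa using sqrt_sum_norm_add_sq_le (fun i => p i - q (σ i)) fun i => q (σ i) - r (τ (σ i))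
    _ = Gdist p q + Gdist q r := by rw [hreindex, Gdist, Gdist, ← hσ, ← hτ]

lemma gdist_le_of_eq_of_forall_norm_sub_le {p q : Fin Q → EuclideanSpace ℝ (Fin n)} {r : ℝ}
    (hr : 0 ≤ r) {i₀ : Fin Q} (h₀ : p i₀ = q i₀) (h : ∀ i, ‖p i - q i‖ ≤ r) :
    Gdist p q ≤ ((Q : ℝ) - 1) * r := by
  have hQ : ((Q - 1 : ℕ) : ℝ) = (Q : ℝ) - 1 := by
    rw [Nat.cast_sub (Fin.pos i₀), Nat.cast_one]
  have hcard : (univ.erase i₀).card = Q - 1 := by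
    rw [card_erase_of_mem (mem_univ i₀), card_univ, Fintype.card_fin]
  have hsum : ∑ i, ‖p i - q i‖ ^ 2 ≤ ((Q : ℝ) - 1) * r ^ 2 := by
    rw [← add_sum_erase _ _ (mem_univ i₀), h₀, sub_self, norm_zero,
      zero_pow two_ne_zero, zero_add, ← hQ, ← hcard, ← nsmul_eq_mul]
    exact sum_le_card_nsmul _ _ _ fun i _ => pow_le_pow_left₀ (norm_nonneg _) (h i) 2
  have hle : ((Q : ℝ) - 1) * r ^ 2 ≤ (((Q : ℝ) - 1) * r) ^ 2 := by
    rw [mul_pow, ← hQ]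
    gcongr
    exact_mod_cast Nat.le_self_pow two_ne_zero _
  calc Gdist p q ≤ √(∑ i, ‖p i - q i‖ ^ 2) := by simpa using gdist_le_sqrt_sum p q 1
    _ ≤ √((((Q : ℝ) - 1) * r) ^ 2) := Real.sqrt_le_sqrt (hsum.trans hle)
    _ = ((Q : ℝ) - 1) * r := Real.sqrt_sq (mul_nonneg (by rw [← hQ]; positivity) hr)

end Gdist

section MinSep

variable {ι E : Type*} [Fintype ι] [NormedAddCommGroup E]

/-- For a tuple with a single distinct point this is the junk value `sInf ∅ = 0`. -/
noncomputable def minSep (q : ι → E) : ℝ :=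
  sInf {d : ℝ | ∃ x ∈ Set.range q, ∃ y ∈ Set.range q, x ≠ y ∧ d = ‖x - y‖}

lemma exists_norm_sub_eq_minSep [DecidableEq E] {q : ι → E} (h : 2 ≤ (univ.image q).card) :
    ∃ i j, q i ≠ q j ∧ ‖q i - q j‖ = minSep q := by
  set S := {d : ℝ | ∃ x ∈ Set.range q, ∃ y ∈ Set.range q, x ≠ y ∧ d = ‖x - y‖}
  have hfin : S.Finite := by
    refine ((Set.finite_range q).image2 (fun x y => ‖x - y‖) (Set.finite_range q)).subset ?_
    rintro d ⟨x, hx, y, hy, -, rfl⟩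
    exact Set.mem_image2_of_mem hx hy
  have hne : S.Nonempty := by
    obtain ⟨a, ha, b, hb, hab⟩ := one_lt_card.1 h
    obtain ⟨i, -, rfl⟩ := mem_image.1 ha
    obtain ⟨j, -, rfl⟩ := mem_image.1 hb
    exact ⟨_, _, ⟨i, rfl⟩, _, ⟨j, rfl⟩, hab, rfl⟩
  obtain ⟨_, ⟨i, rfl⟩, _, ⟨j, rfl⟩, hij, hd⟩ := hne.csInf_mem hfin
  exact ⟨i, j, hij, hd.symm⟩

lemma minSep_pos [DecidableEq E] {q : ι → E} (h : 2 ≤ (univ.image q).card) :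
    0 < minSep q := by
  obtain ⟨i, j, hij, hd⟩ := exists_norm_sub_eq_minSep h
  exact hd ▸ norm_sub_pos_iff.2 hij

end MinSep

section NestingStep

variable {n Q : ℕ}

/-- In the paper's notation `q = q^{(k-1)}`, `q' = q^{(k)}`, `ρ = ρ_k`, `c * minSep q = σ_{k-1}`. -/
structure IsNestingStep (c A : ℝ) (q q' : Fin Q → EuclideanSpace ℝ (Fin n)) (ρ : ℝ) : Prop where
  range_ssubset : Set.range q' ⊂ Set.range q
  lt_radius : c * minSep q < ρ
  radius_le : ρ ≤ A ^ (Q - 1) * (c * minSep q)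
  gdist_add_le : Gdist q q' + c * minSep q ≤ ρ
  separated : ∀ a b, q' a ≠ q' b → 10 * Q * ρ ≤ c * ‖q' a - q' b‖

def nestingScale (Q : ℕ) (d A : ℝ) (k : ℕ) : ℝ := 10 * Q * d * A ^ k

section NestingScale

variable {c d A : ℝ} {k : ℕ}

lemma nestingScale_mono (hd : 0 ≤ d) (hA1 : 1 ≤ A) : Monotone (nestingScale Q d A) :=
  fun _ _ hab => by unfold nestingScale; gcongr

lemma add_nestingScale_le (hc : 0 < c) (hd : 0 < d) (hA1 : 1 ≤ A)
    (hA : 10 * Q * ((Q : ℝ) - 1) ^ 2 ≤ c * (A - 1)) (hk : k + 2 ≤ Q) :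
    c * d + ((Q : ℝ) - 1) ^ 2 * nestingScale Q d A k ≤ A ^ (Q - 1) * (c * d) := by
  have hAk : 0 ≤ A ^ k - 1 := sub_nonneg.2 (one_le_pow₀ hA1)
  calc c * d + ((Q : ℝ) - 1) ^ 2 * nestingScale Q d A k
        = c * d + 10 * Q * ((Q : ℝ) - 1) ^ 2 * (d * A ^ k) := by unfold nestingScale; ring
    _ ≤ c * d + c * (A - 1) * (d * A ^ k) := by gcongr
    _ = A ^ (k + 1) * (c * d) - c * d * (A ^ k - 1) := by ring
    _ ≤ A ^ (k + 1) * (c * d) := sub_le_self _ (by positivity)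
    _ ≤ A ^ (Q - 1) * (c * d) := by gcongr; omega

lemma mul_add_nestingScale_le (hc : 0 ≤ c) (hd : 0 ≤ d) (hA1 : 1 ≤ A)
    (hA : 10 * Q * ((Q : ℝ) - 1) ^ 2 ≤ c * (A - 1)) :
    10 * Q * (c * d + ((Q : ℝ) - 1) ^ 2 * nestingScale Q d A k) ≤
      c * nestingScale Q d A (k + 1) := by
  have h0 : c * nestingScale Q d A 0 ≤ c * nestingScale Q d A k :=
    mul_le_mul_of_nonneg_left (nestingScale_mono hd hA1 k.zero_le) hc
  have ht : 0 ≤ nestingScale Q d A k := by unfold nestingScale; positivity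
  have hsucc : nestingScale Q d A (k + 1) = A * nestingScale Q d A k := by
    unfold nestingScale; ring
  have hcd : 10 * Q * (c * d) = c * nestingScale Q d A 0 := by unfold nestingScale; ring
  nlinarith

end NestingScale

theorem exists_isNestingStep {c A : ℝ} (hc : 0 < c)
    (hA : 10 * Q * ((Q : ℝ) - 1) ^ 2 ≤ c * (A - 1)) {q : Fin Q → EuclideanSpace ℝ (Fin n)}
    (hq : 2 ≤ (univ.image q).card) : ∃ q' ρ, IsNestingStep c A q q' ρ := by
  set d := minSep q
  obtain ⟨i₀, j₀, hij, hd⟩ := exists_norm_sub_eq_minSep hq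
  have hd0 : 0 < d := minSep_pos hq
  have hQ : (2 : ℝ) ≤ Q := by exact_mod_cast hq.trans (card_image_fin_le q)
  have hA1 : 1 ≤ A := by
    have : 0 ≤ c * (A - 1) := le_trans (by positivity) hA
    linarith [nonneg_of_mul_nonneg_right this hc]
  have hw := nestingScale_mono (Q := Q) hd0.le hA1
  have hdw : dist (q i₀) (q j₀) ≤ nestingScale Q d A 0 := by
    rw [dist_eq_norm, hd, nestingScale, pow_zero, mul_one]
    nlinarith
  obtain ⟨k, hk, hstable⟩ := exists_stable_scale hw (ne_of_apply_ne q hij) hdw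
  rw [Fintype.card_fin] at hk
  set t := nestingScale Q d A k
  have ht0 : 0 < t := mul_pos (by positivity) (pow_pos (by linarith) k)
  refine ⟨collapse q t, c * d + ((Q : ℝ) - 1) ^ 2 * t, ⟨?_, ?_, ?_, ?_, ?_⟩⟩
  · exact range_collapse_ssubset ht0.le hij (hdw.trans (hw k.zero_le))
  · linarith [mul_pos (pow_pos (by linarith : (0 : ℝ) < Q - 1) 2) ht0]
  · exact add_nestingScale_le hc hd0 hA1 hA hk
  · have hmove : ∀ i, ‖q i - collapse q t i‖ ≤ ((Q : ℝ) - 1) * t := fun i => by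
      simpa [dist_eq_norm] using dist_collapse_le (q := q) ht0.le i
    have := gdist_le_of_eq_of_forall_norm_sub_le (mul_nonneg (by linarith) ht0.le)
      (collapse_clusterRep (i := i₀)).symm hmove
    linarith
  · intro a b hab
    have hsep := lt_dist_collapse hstable hab
    rw [dist_eq_norm] at hsep
    exact (mul_add_nestingScale_le hc.le hd0.le hA1 hA).trans
      (mul_le_mul_of_nonneg_left hsep.le hc.le)

end NestingStep

section NestingChain

variable {n Q : ℕ} {c A : ℝ}

structure IsNestingChain (c A : ℝ) (qs : ℕ → Fin Q → EuclideanSpace ℝ (Fin n)) (ρ : ℕ → ℝ)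
    (L : ℕ) : Prop where
  radius_zero : ρ 0 = 0
  two_le_card : ∀ k < L, 2 ≤ (univ.image (qs k)).card
  step : ∀ k < L, IsNestingStep c A (qs k) (qs (k + 1)) (ρ (k + 1))

namespace IsNestingChain

variable {qs : ℕ → Fin Q → EuclideanSpace ℝ (Fin n)} {ρ : ℕ → ℝ} {L : ℕ}

lemma mul_minSep_pos (h : IsNestingChain c A qs ρ L) (hc : 0 < c) {k : ℕ} (hk : k < L) :
    0 < c * minSep (qs k) :=
  mul_pos hc (minSep_pos (h.two_le_card k hk))

lemma mul_radius_le (h : IsNestingChain c A qs ρ L) (hc : 0 < c) :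
    ∀ k < L, 10 * Q * ρ k ≤ c * minSep (qs k) := by
  rintro (_ | k) hk
  · rw [h.radius_zero, mul_zero]
    exact (h.mul_minSep_pos hc hk).le
  · obtain ⟨a, b, hab, hd⟩ := exists_norm_sub_eq_minSep (h.two_le_card _ hk)
    exact hd ▸ (h.step k (by omega)).separated a b hab

lemma radius_nonneg (h : IsNestingChain c A qs ρ L) (hc : 0 < c) :
    ∀ k ≤ L, 0 ≤ ρ k := by
  rintro (_ | k) hk
  · exact h.radius_zero.ge
  · linarith [(h.step k hk).lt_radius, h.mul_minSep_pos hc hk]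

lemma radius_lt (h : IsNestingChain c A qs ρ L) (hc : 0 < c) :
    ∀ k < L, ρ k < c * minSep (qs k) := by
  intro k hk
  have hQ : (2 : ℝ) ≤ Q := by exact_mod_cast (h.two_le_card k hk).trans (card_image_fin_le _)
  have := h.mul_radius_le hc k hk
  nlinarith [h.mul_minSep_pos hc hk, h.radius_nonneg hc k hk.le]

lemma gdist_lt_radius (h : IsNestingChain c A qs ρ L) (hc : 0 < c) :
    ∀ k < L, Gdist (qs 0) (qs (k + 1)) < ρ (k + 1) := by
  intro k hk
  induction k with
  | zero => linarith [(h.step 0 hk).gdist_add_le, h.mul_minSep_pos hc hk]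
  | succ k ih =>
    linarith [gdist_triangle (qs 0) (qs (k + 1)) (qs (k + 2)), ih (by omega),
      (h.step (k + 1) hk).gdist_add_le, h.radius_lt hc (k + 1) hk]

end IsNestingChain

theorem exists_isNestingChain (hc : 0 < c) (hA : 10 * Q * ((Q : ℝ) - 1) ^ 2 ≤ c * (A - 1))
    {q : Fin Q → EuclideanSpace ℝ (Fin n)} (hq : 2 ≤ (univ.image q).card) :
    ∃ L qs ρ, IsNestingChain c A qs ρ L ∧ 1 ≤ L ∧ L ≤ Q - 1 ∧ qs 0 = q ∧
      (univ.image (qs L)).card = 1 := by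
  have hstep : ∀ x : Fin Q → EuclideanSpace ℝ (Fin n), ∃ x' r,
      2 ≤ (univ.image x).card → IsNestingStep c A x x' r := by
    intro x
    by_cases hx : 2 ≤ (univ.image x).card
    · obtain ⟨x', r, h⟩ := exists_isNestingStep hc hA hx
      exact ⟨x', r, fun _ => h⟩
    · exact ⟨x, 0, fun h => absurd h hx⟩
  choose F R hF using hstep
  obtain ⟨L, hlen, hlt, hge⟩ := Function.exists_iterate_lt_two F (fun x => (univ.image x).card)
    (fun x hx => card_image_lt_of_range_ssubset (hF x hx).range_ssubset) q
  beta_reduce at hlen hlt hge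
  have hQ : 2 ≤ Q := hq.trans (card_image_fin_le q)
  have hne : 1 ≤ (univ.image (F^[L] q)).card :=
    card_pos.2 ⟨_, mem_image_of_mem _ (mem_univ ⟨0, by omega⟩)⟩
  refine ⟨L, fun k => F^[k] q, Nat.rec 0 fun k _ => R (F^[k] q), ⟨rfl, hge, fun k hk => ?_⟩,
    ?_, ?_, rfl, (Nat.lt_succ_iff.1 hlt).antisymm hne⟩
  · simpa only [Function.iterate_succ_apply'] using hF _ (hge k hk)
  · rcases L with _ | L
    · exact absurd hq (by simpa using hlt)
    · omega
  · have := card_image_fin_le q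
    omega

end NestingChain

theorem stmt_11_general (n Q : ℕ) :
    ∃ θ₀ : ℝ, 0 < θ₀ ∧ θ₀ ≤ Real.pi / 4 ∧
    ∀ q : Fin Q → EuclideanSpace ℝ (Fin n),
      2 ≤ (Finset.univ.image q).card →
      ∃ (L : ℕ) (qs : ℕ → Fin Q → EuclideanSpace ℝ (Fin n)) (ρ σv : ℕ → ℝ),
        1 ≤ L ∧ L ≤ Q - 1 ∧ qs 0 = q ∧ ρ 0 = 0 ∧
        (∀ k, 1 ≤ k → k ≤ L → Set.range (qs k) ⊂ Set.range (qs (k - 1))) ∧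
        (Finset.univ.image (qs L)).card = 1 ∧
        (∀ k, k < L → σv k = Real.sin θ₀ / 4 *
          sInf {d : ℝ | ∃ x ∈ Set.range (qs k), ∃ y ∈ Set.range (qs k),
            x ≠ y ∧ d = ‖x - y‖}) ∧
        (∀ k, k < L → 10 * (Q : ℝ) * ρ k ≤ σv k) ∧
        (∀ k, k < L → ρ k < σv k ∧ σv k < ρ (k + 1)) ∧
        (∀ k, 1 ≤ k → k ≤ L →
          ρ k ≤ (1 + 2 * (20 * (Q : ℝ) / Real.sin θ₀) * ((Q : ℝ) - 1) ^ 2) ^ (Q - 1)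
            * σv (k - 1)) ∧
        (∀ k, 1 ≤ k → k ≤ L → ∀ p : Fin Q → EuclideanSpace ℝ (Fin n),
          Gdist p (qs (k - 1)) ≤ σv (k - 1) → Gdist p (qs k) ≤ ρ k) ∧
        (∀ k, 1 ≤ k → k ≤ L → Gdist (qs 0) (qs k) < ((Q : ℝ) - 1) * ρ k) := by
  refine ⟨Real.pi / 4, by positivity, le_rfl, fun q hq => ?_⟩
  set s := Real.sin (Real.pi / 4)
  have hs : 0 < s := Real.sin_pos_of_pos_of_lt_pi (by positivity) (by linarith [Real.pi_pos])
  have hc : 0 < s / 4 := by positivity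
  have hA : 10 * Q * ((Q : ℝ) - 1) ^ 2 ≤ s / 4 * (1 + 2 * (20 * Q / s) * ((Q : ℝ) - 1) ^ 2 - 1) :=
    le_of_eq (by field_simp; ring)
  have hQ : (1 : ℝ) ≤ Q - 1 := by
    have : 2 ≤ Q := hq.trans (card_image_fin_le q)
    rw [le_sub_iff_add_le]
    exact_mod_cast this
  obtain ⟨L, qs, ρ, hchain, hL1, hLQ, hq0, hLcard⟩ := exists_isNestingChain hc hA hq
  refine ⟨L, qs, ρ, fun k => s / 4 * minSep (qs k), hL1, hLQ, hq0, hchain.radius_zero,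
    Nat.forall_one_le_of_forall_succ fun k hk => (hchain.step k hk).range_ssubset, hLcard,
    fun k _ => rfl, hchain.mul_radius_le hc,
    fun k hk => ⟨hchain.radius_lt hc k hk, (hchain.step k hk).lt_radius⟩,
    Nat.forall_one_le_of_forall_succ fun k hk => (hchain.step k hk).radius_le,
    Nat.forall_one_le_of_forall_succ fun k hk p (hp : Gdist p (qs k) ≤ s / 4 * minSep (qs k)) => ?_,
    Nat.forall_one_le_of_forall_succ fun k hk => ?_⟩
  · linarith [gdist_triangle p (qs k) (qs (k + 1)), (hchain.step k hk).gdist_add_le]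
  · nlinarith [hchain.gdist_lt_radius hc k hk, hchain.radius_nonneg hc (k + 1) hk]

/-- Existence of nested admissible closed balls: there is a constant `θ₀ = θ₀(n,Q) ∈ (0, π/4]`
such that for every `q ∈ Q_Q(ℝⁿ)` with at least two distinct support points there exist
`1 ≤ L ≤ Q−1`, members `q^{(0)} = q, q^{(1)}, …, q^{(L)}` and radii
`0 = ρ₀ < σ₀ < ρ₁ < σ₁ < ⋯ < ρ_L` with: strictly decreasing supports ending in a singleton;
`σ_k = (sin θ₀/4)·min` mutual distance of support points of `q^{(k)}` and `10Q·ρ_k ≤ σ_k`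
for `k < L`; `σ_{k−1} < ρ_k ≤ C₀(n,Q)·σ_{k−1}` with
`C₀ = (1 + 2K(Q−1)²)^{Q−1}`, `K = 20Q/sin θ₀`; the nesting
`B^Q_{σ_{k−1}}(q^{(k−1)}) ⊆ B^Q_{ρ_k}(q^{(k)})`; and `G(q^{(0)}, q^{(k)}) < (Q−1)·ρ_k`. -/
theorem stmt_11 (n Q : ℕ) (hQ : 2 ≤ Q) :
    ∃ θ₀ : ℝ, 0 < θ₀ ∧ θ₀ ≤ Real.pi / 4 ∧
    ∀ q : Fin Q → EuclideanSpace ℝ (Fin n),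
      2 ≤ (Finset.univ.image q).card →
      ∃ (L : ℕ) (qs : ℕ → Fin Q → EuclideanSpace ℝ (Fin n)) (ρ σv : ℕ → ℝ),
        1 ≤ L ∧ L ≤ Q - 1 ∧ qs 0 = q ∧ ρ 0 = 0 ∧
        (∀ k, 1 ≤ k → k ≤ L → Set.range (qs k) ⊂ Set.range (qs (k - 1))) ∧
        (Finset.univ.image (qs L)).card = 1 ∧
        (∀ k, k < L → σv k = Real.sin θ₀ / 4 *
          sInf {d : ℝ | ∃ x ∈ Set.range (qs k), ∃ y ∈ Set.range (qs k),
            x ≠ y ∧ d = ‖x - y‖}) ∧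
        (∀ k, k < L → 10 * (Q : ℝ) * ρ k ≤ σv k) ∧
        (∀ k, k < L → ρ k < σv k ∧ σv k < ρ (k + 1)) ∧
        (∀ k, 1 ≤ k → k ≤ L →
          ρ k ≤ (1 + 2 * (20 * (Q : ℝ) / Real.sin θ₀) * ((Q : ℝ) - 1) ^ 2) ^ (Q - 1)
            * σv (k - 1)) ∧
        (∀ k, 1 ≤ k → k ≤ L → ∀ p : Fin Q → EuclideanSpace ℝ (Fin n),
          Gdist p (qs (k - 1)) ≤ σv (k - 1) → Gdist p (qs k) ≤ ρ k) ∧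
        (∀ k, 1 ≤ k → k ≤ L → Gdist (qs 0) (qs k) < ((Q : ℝ) - 1) * ρ k) :=
  stmt_11_general n Q
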